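/- Let G be a finite graph with perfect matchings and F a family of even cycles of G such that: (i) any two perfect matchings of G are connected in the resonance graph R(G;F), and (ii) every cycle in F has length 4. Then the forcing spectrum of G, Spec(G) = {f(G,M) : M a perfect matching of G}, is an interval of integers. -/

import Mathlib

open SimpleGraph

variable {V : Type*}

/-- `M` is a perfect matching of `G`, given as a set of edges: every vertex is
incident with exactly one edge of `M`. -/
def IsPM (G : SimpleGraph V) (M : Set (Sym2 V)) : Prop :=
  M ⊆ G.edgeSet ∧ ∀ v : V, ∃! e, e ∈ M ∧ v ∈ e

/-- The set of endpoints of a set of edges. -/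
def edgeVerts (C : Set (Sym2 V)) : Set V := {v | ∃ e ∈ C, v ∈ e}

/-- `C` is the edge set of a cycle of `G`: nonempty, every vertex it covers lies on
exactly two of its edges, and it is connected. -/
def IsCycleSet (G : SimpleGraph V) (C : Set (Sym2 V)) : Prop :=
  C ⊆ G.edgeSet ∧ C.Nonempty ∧
    (∀ v ∈ edgeVerts C, {e | e ∈ C ∧ v ∈ e}.ncard = 2) ∧
    ((SimpleGraph.fromEdgeSet C).induce (edgeVerts C)).Connected

/-- `C` is an `M`-alternating cycle: a cycle whose edges lie alternately in the matching
`M` and outside of it; for a matching this is equivalent to every vertex of `C` being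
covered by an edge of `C ∩ M`. -/
def IsAltCycle (G : SimpleGraph V) (M C : Set (Sym2 V)) : Prop :=
  IsCycleSet G C ∧ ∀ v ∈ edgeVerts C, ∃ e ∈ C ∩ M, v ∈ e

/-- `S` is a forcing set of the perfect matching `M`: `S ⊆ M` and `M` is the unique
perfect matching of `G` containing `S`. -/
def IsForcingSet (G : SimpleGraph V) (M S : Set (Sym2 V)) : Prop :=
  S ⊆ M ∧ ∀ M' : Set (Sym2 V), IsPM G M' → S ⊆ M' → M' = M

/-- The forcing number `f(G,M)`: the minimum size of a forcing set of `M`. -/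
noncomputable def forcingNumber (G : SimpleGraph V) (M : Set (Sym2 V)) : ℕ :=
  sInf {n | ∃ S : Set (Sym2 V), IsForcingSet G M S ∧ S.ncard = n}

/-!
If `S` is a minimum forcing set of `A` and `B` differs from `A` by a flip, then `S ∩ B` together
with the new edges `B \ A` forces `B`: a perfect matching containing them flips back to one
containing `S`, that is, to `A`. As `S ⊄ B`, this gives `f(G,B) + 1 ≤ f(G,A) + |B \ A|`, and
along a 4-cycle `|B \ A| = 2`, since each side of a flip has at least two edges. So the forcing
number changes by at most one per step of a path in `R(G;F)`, and along a path from `M` to `M'`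
it takes every value between `f(G,M)` and `f(G,M')`.
-/

section

variable {G : SimpleGraph V} {A B M S : Set (Sym2 V)}

namespace IsPM

lemma exists_mem (hM : IsPM G M) (v : V) : ∃ e ∈ M, v ∈ e :=
  let ⟨e, he, _⟩ := hM.2 v
  ⟨e, he⟩

lemma eq_of_mem (hM : IsPM G M) {v : V} {e f : Sym2 V} (he : e ∈ M) (hf : f ∈ M)
    (hve : v ∈ e) (hvf : v ∈ f) : e = f :=
  (hM.2 v).unique ⟨he, hve⟩ ⟨hf, hvf⟩

lemma eq_of_subset (hA : IsPM G A) (hB : IsPM G B) (hAB : A ⊆ B) : A = B := by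
  refine hAB.antisymm fun e he => ?_
  obtain ⟨a, ha, hva⟩ := hA.exists_mem e.out.1
  rwa [hB.eq_of_mem he (hAB ha) e.out_fst_mem hva]

/-- The edge of `B` at an end of `e` lies in `B \ A ⊆ M`. -/
lemma notMem_of_sdiff_subset (hA : IsPM G A) (hB : IsPM G B) (hM : IsPM G M) (hBAM : B \ A ⊆ M)
    {e : Sym2 V} (he : e ∈ A \ B) : e ∉ M := by
  intro heM
  obtain ⟨b, hb, hvb⟩ := hB.exists_mem e.out.1
  have hbA : b ∉ A := fun hbA => he.2 (hA.eq_of_mem he.1 hbA e.out_fst_mem hvb ▸ hb)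
  exact he.2 (hM.eq_of_mem heM (hBAM ⟨hb, hbA⟩) e.out_fst_mem hvb ▸ hb)

lemma symmDiff_symmDiff (hA : IsPM G A) (hB : IsPM G B) (hM : IsPM G M) (hBAM : B \ A ⊆ M) :
    IsPM G (symmDiff M (symmDiff A B)) := by
  refine ⟨fun e he => ?_, fun v => ?_⟩
  · rcases Set.mem_symmDiff.1 he with ⟨heM, -⟩ | ⟨heAB, -⟩
    · exact hM.1 heM
    · rcases Set.mem_symmDiff.1 heAB with ⟨heA, -⟩ | ⟨heB, -⟩
      exacts [hA.1 heA, hB.1 heB]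
  obtain ⟨a, ha, hva⟩ := hA.exists_mem v
  obtain ⟨b, hb, hvb⟩ := hB.exists_mem v
  obtain ⟨m, hm, hvm⟩ := hM.exists_mem v
  have hAM := fun e (he : e ∈ A \ B) => hA.notMem_of_sdiff_subset hB hM hBAM he
  have uA := fun e (he : e ∈ A) (hv : v ∈ e) => hA.eq_of_mem he ha hv hva
  have uB := fun e (he : e ∈ B) (hv : v ∈ e) => hB.eq_of_mem he hb hv hvb
  have uM := fun e (he : e ∈ M) (hv : v ∈ e) => hM.eq_of_mem he hm hv hvm
  simp only [Set.mem_symmDiff, Set.mem_sdiff] at hAM hBAM ⊢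
  by_cases hab : a = b
  · subst hab
    refine ⟨m, ?_, ?_⟩ <;> grind
  · refine ⟨a, ?_, ?_⟩ <;> grind

lemma two_le_ncard_sdiff [Finite V] (hA : IsPM G A) (hB : IsPM G B) (hAB : A ≠ B) :
    2 ≤ (A \ B).ncard := by
  obtain ⟨p, hpA, hpB⟩ : (A \ B).Nonempty :=
    Set.sdiff_nonempty.2 fun h => hAB (hA.eq_of_subset hB h)
  obtain ⟨x, hxp⟩ : ∃ x, x ∈ p := ⟨_, p.out_fst_mem⟩
  obtain ⟨q, hqB, hxq⟩ := hB.exists_mem x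
  set z := Sym2.Mem.other hxq
  have hq : q = s(x, z) := (Sym2.other_spec hxq).symm
  have hxz : x ≠ z := G.ne_of_adj (G.mem_edgeSet.1 (hq ▸ hB.1 hqB))
  have hqA : q ∉ A := fun hqA => hpB (hA.eq_of_mem hqA hpA hxq hxp ▸ hqB)
  obtain ⟨p', hp'A, hzp'⟩ := hA.exists_mem z
  have hp'B : p' ∉ B := fun hp'B =>
    hqA (hB.eq_of_mem hp'B hqB hzp' (Sym2.other_mem hxq) ▸ hp'A)
  have hpp' : p ≠ p' := by
    rintro rfl
    exact hpB (((Sym2.mem_and_mem_iff hxz).1 ⟨hxp, hzp'⟩).trans hq.symm ▸ hqB)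
  exact (Set.one_lt_ncard_iff).2 ⟨p, p', ⟨hpA, hpB⟩, ⟨hp'A, hp'B⟩, hpp'⟩

lemma isForcingSet_self (hA : IsPM G A) : IsForcingSet G A A :=
  ⟨subset_rfl, fun _ hM hAM => (hA.eq_of_subset hM hAM).symm⟩

end IsPM

lemma exists_isForcingSet_ncard_eq (hA : IsPM G A) :
    ∃ S, IsForcingSet G A S ∧ S.ncard = forcingNumber G A := by
  have hne : {n | ∃ S, IsForcingSet G A S ∧ S.ncard = n}.Nonempty :=
    ⟨_, A, hA.isForcingSet_self, rfl⟩
  exact Nat.sInf_mem hne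

lemma forcingNumber_le_ncard (hS : IsForcingSet G A S) : forcingNumber G A ≤ S.ncard :=
  Nat.sInf_le ⟨S, hS, rfl⟩

lemma IsForcingSet.inter_union_sdiff (hS : IsForcingSet G A S) (hA : IsPM G A) (hB : IsPM G B) :
    IsForcingSet G B (S ∩ B ∪ B \ A) := by
  refine ⟨Set.union_subset Set.inter_subset_right Set.sdiff_subset, fun M hM hSM => ?_⟩
  have hBAM : B \ A ⊆ M := Set.union_subset_iff.1 hSM |>.2
  have hN := hA.symmDiff_symmDiff hB hM hBAM
  have hSN : S ⊆ symmDiff M (symmDiff A B) := by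
    intro e he
    have heA := hS.1 he
    by_cases heB : e ∈ B
    · refine Set.mem_symmDiff.2 (Or.inl ⟨hSM (Or.inl ⟨he, heB⟩), ?_⟩)
      simp [Set.mem_symmDiff, heA, heB]
    · exact Set.mem_symmDiff.2 (Or.inr ⟨Or.inl ⟨heA, heB⟩,
        hA.notMem_of_sdiff_subset hB hM hBAM ⟨heA, heB⟩⟩)
  simpa only [symmDiff_symmDiff_cancel_right, symmDiff_symmDiff_cancel_left] using
    congrArg (symmDiff · (symmDiff A B)) (hS.2 _ hN hSN)

lemma forcingNumber_add_one_le [Finite V] (hA : IsPM G A) (hB : IsPM G B) (hAB : A ≠ B) :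
    forcingNumber G B + 1 ≤ forcingNumber G A + (B \ A).ncard := by
  obtain ⟨S, hS, hSA⟩ := exists_isForcingSet_ncard_eq hA
  have hSB : S ∩ B ⊂ S := by
    refine Set.inter_subset_left.ssubset_of_ne fun h => hAB (hS.2 B hB ?_).symm
    exact h ▸ Set.inter_subset_right
  calc forcingNumber G B + 1 ≤ (S ∩ B ∪ B \ A).ncard + 1 :=
        Nat.add_le_add_right (forcingNumber_le_ncard (hS.inter_union_sdiff hA hB)) 1
    _ ≤ (S ∩ B).ncard + (B \ A).ncard + 1 := Nat.add_le_add_right (Set.ncard_union_le _ _) 1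
    _ ≤ forcingNumber G A + (B \ A).ncard := by
        have := Set.ncard_lt_ncard hSB
        omega

lemma forcingNumber_le_add_one_of_ncard_symmDiff_eq_four [Finite V] (hA : IsPM G A)
    (hB : IsPM G B) (h4 : (symmDiff A B).ncard = 4) :
    forcingNumber G B ≤ forcingNumber G A + 1 := by
  have hAB : A ≠ B := by
    rintro rfl
    simp at h4
  have hsum : (A \ B).ncard + (B \ A).ncard = 4 := by
    rw [← Set.ncard_union_eq disjoint_sdiff_sdiff, ← Set.symmDiff_def, h4]
  have := hA.two_le_ncard_sdiff hB hAB
  have := forcingNumber_add_one_le hA hB hAB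
  omega

end

lemma Relation.ReflTransGen.exists_eq_of_le_add_one {α : Type*} {r : α → α → Prop}
    {f : α → ℕ} (hf : ∀ x y, r x y → f y ≤ f x + 1) {x y : α} (h : Relation.ReflTransGen r x y)
    {b : ℕ} (hx : f x ≤ b) (hy : b ≤ f y) : ∃ z, Relation.ReflTransGen r x z ∧ f z = b := by
  induction h with
  | refl => exact ⟨x, .refl, le_antisymm hx hy⟩
  | @tail y z hxy hyz ih =>
    by_cases hb : b ≤ f y
    · exact ih hb
    · exact ⟨z, hxy.tail hyz, by have := hf y z hyz; omega⟩

/-- if any two perfect matchings of `G` are connected in the resonance graph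
`R(G;F)` and every cycle of `F` has length 4, then the forcing spectrum of `G` is an
integer interval. -/
theorem stmt_16 {V : Type*} [Fintype V] (G : SimpleGraph V) (F : Set (Set (Sym2 V)))
    (hFcyc : ∀ C ∈ F, IsCycleSet G C ∧ C.ncard = 4)
    (hconn : ∀ M M' : Set (Sym2 V), IsPM G M → IsPM G M' →
      Relation.ReflTransGen
        (fun A B => IsPM G A ∧ IsPM G B ∧ ∃ C ∈ F, symmDiff A B = C) M M') :
    ∀ a b c : ℕ, a ∈ {k : ℕ | ∃ M, IsPM G M ∧ forcingNumber G M = k} →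
      c ∈ {k : ℕ | ∃ M, IsPM G M ∧ forcingNumber G M = k} →
      a ≤ b → b ≤ c → b ∈ {k : ℕ | ∃ M, IsPM G M ∧ forcingNumber G M = k} := by
  rintro _ b _ ⟨M, hM, rfl⟩ ⟨M', hM', rfl⟩ hMb hbM'
  have hflip : ∀ A B, (IsPM G A ∧ IsPM G B ∧ ∃ C ∈ F, symmDiff A B = C) →
      forcingNumber G B ≤ forcingNumber G A + 1 := by
    rintro A B ⟨hA, hB, C, hC, rfl⟩
    exact forcingNumber_le_add_one_of_ncard_symmDiff_eq_four hA hB (hFcyc _ hC).2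
  obtain ⟨N, hMN, rfl⟩ := (hconn M M' hM hM').exists_eq_of_le_add_one hflip hMb hbM'
  refine ⟨N, ?_, rfl⟩
  rcases hMN.cases_tail with rfl | ⟨_, -, -, hN, -⟩
  exacts [hM, hN]
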